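/- arXiv:1403.5827 — 2 statements merged into one kernel-verified Lean document; each statement's English description precedes it below -/
import Mathlib

section
/- For every integer n ≥ 2, the sum of L(n+s-2, s) over s from 0 to n-1, plus the diagonal value ((3n-4)/(2n-2))·binom(2n-2, n-2), equals L(2n-1, n-1) = ((3n-2)/(2n-1))·binom(2n-1, n-1). -/
/-!
For `t ≥ 1` the Lucas entry is `L(t,s) = 2·C(t,s) - C(t-1,s)`, a linear combination of two
shifted Pascal triangles, so it obeys Pascal's rule `L(t+1,s+1) = L(t,s) + L(t,s+1)` away from
the apex `t = 0`. Hence the hockey-stick identity holds for `L`, which sums the first `n` terms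
to `L(2n-2, n-1)`; the diagonal value is `L(2n-2, n-2)`, the right-hand side is `L(2n-1, n-1)`,
and one more Pascal step finishes.
-/

/-- The Lucas triangle entry, with the convention `L(t,0) = 1`. -/
def lucas (t s : ℕ) : ℚ := if s = 0 then 1 else ((s : ℚ) + t) / t * (t.choose s : ℚ)

lemma lucas_of_ne_zero {t : ℕ} (ht : t ≠ 0) (s : ℕ) :
    lucas t s = ((s : ℚ) + t) / t * (t.choose s : ℚ) := by
  unfold lucas
  split_ifs with hs
  · simp [hs, ht]
  · rfl

lemma lucas_succ_left (u s : ℕ) :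
    lucas (u + 1) s = 2 * ((u + 1).choose s : ℚ) - (u.choose s : ℚ) := by
  cases s with
  | zero => norm_num [lucas]
  | succ v =>
    have hmul : ((u : ℚ) + 1) * u.choose v = ((u + 1).choose (v + 1) : ℚ) * (v + 1) := by
      exact_mod_cast Nat.add_one_mul_choose_eq u v
    have hpascal : ((u + 1).choose (v + 1) : ℚ) = u.choose v + u.choose (v + 1) := by
      exact_mod_cast Nat.choose_succ_succ' u v
    rw [lucas_of_ne_zero (by omega : u + 1 ≠ 0)]
    push_cast
    field_simp
    linear_combination -hmul - ((u : ℚ) + 1) * hpascal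

lemma lucas_succ_succ {t : ℕ} (ht : t ≠ 0) (s : ℕ) :
    lucas (t + 1) (s + 1) = lucas t s + lucas t (s + 1) := by
  obtain ⟨u, rfl⟩ := Nat.exists_eq_succ_of_ne_zero ht
  simp only [Nat.succ_eq_add_one, lucas_succ_left, Nat.choose_succ_succ', Nat.cast_add]
  ring

lemma sum_range_lucas_add (m k : ℕ) :
    ∑ s ∈ Finset.range (k + 1), lucas (m + s) s = lucas (m + k + 1) k := by
  induction k with
  | zero => simp [lucas]
  | succ k ih =>
    rw [Finset.sum_range_succ, ih, ← add_assoc, ← lucas_succ_succ (by omega)]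

theorem D_triangle_row_sum (n : ℕ) (hn : 2 ≤ n) :
    (∑ s ∈ Finset.range n, lucas (n + s - 2) s) +
      (3 * (n : ℚ) - 4) / (2 * n - 2) * ((2 * n - 2).choose (n - 2) : ℚ) =
      (3 * (n : ℚ) - 2) / (2 * n - 1) * ((2 * n - 1).choose (n - 1) : ℚ) := by
  obtain ⟨m, rfl⟩ := Nat.exists_eq_add_of_le' hn
  have hrow :
      ∑ s ∈ Finset.range (m + 2), lucas (m + 2 + s - 2) s = lucas (2 * m + 2) (m + 1) := by
    simp only [Nat.add_sub_cancel_right, add_right_comm m 2]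
    rw [sum_range_lucas_add]
    congr 1; ring
  have hdiag : (3 * ((m + 2 : ℕ) : ℚ) - 4) / (2 * (m + 2 : ℕ) - 2) *
      ((2 * (m + 2) - 2).choose (m + 2 - 2) : ℚ) = lucas (2 * m + 2) m := by
    rw [lucas_of_ne_zero (by omega), show 2 * (m + 2) - 2 = 2 * m + 2 by omega, Nat.add_sub_cancel]
    push_cast; ring_nf
  have hright : (3 * ((m + 2 : ℕ) : ℚ) - 2) / (2 * (m + 2 : ℕ) - 1) *
      ((2 * (m + 2) - 1).choose (m + 2 - 1) : ℚ) = lucas (2 * m + 2 + 1) (m + 1) := by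
    rw [lucas_of_ne_zero (by omega), show 2 * (m + 2) - 1 = 2 * m + 2 + 1 by omega,
      show m + 2 - 1 = m + 1 by omega]
    push_cast; ring_nf
  rw [hrow, hdiag, hright, lucas_succ_succ (t := 2 * m + 2) (by omega), add_comm]
end

section
/- For every integer n ≥ 1, (1/(n+1))·binom(2n, n) + (3/(n+2))·binom(2n, n-1) = (1/(n+2))·binom(2n+2, n+1). -/
/-! `binom(2n, n-1) = n/(n+1) · binom(2n, n)` and
`binom(2n+2, n+1) = 2(2n+1)/(n+1) · binom(2n, n)`,
so both sides equal `2(2n+1)/((n+1)(n+2)) · binom(2n, n)`. -/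

namespace Nat

theorem choose_two_mul_pred_mul_succ {n : ℕ} (hn : 1 ≤ n) :
    (2 * n).choose (n - 1) * (n + 1) = n * centralBinom n := by
  rw [choose_symm_of_eq_add (show 2 * n = (n - 1) + (n + 1) by omega), choose_succ_right_eq,
    show 2 * n - n = n by omega, centralBinom_eq_two_mul_choose, Nat.mul_comm]

end Nat

theorem a_A_n_sum (n : ℕ) (hn : 1 ≤ n) :
    1 / ((n : ℚ) + 1) * ((2 * n).choose n : ℚ) +
      3 / ((n : ℚ) + 2) * ((2 * n).choose (n - 1) : ℚ) =
      1 / ((n : ℚ) + 2) * ((2 * n + 2).choose (n + 1) : ℚ) := by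
  have hpred : ((2 * n).choose (n - 1) : ℚ) * (n + 1) = n * Nat.centralBinom n := by
    exact_mod_cast Nat.choose_two_mul_pred_mul_succ hn
  have hsucc :
      ((n : ℚ) + 1) * Nat.centralBinom (n + 1) = 2 * (2 * n + 1) * Nat.centralBinom n := by
    exact_mod_cast Nat.succ_mul_centralBinom_succ n
  rw [← Nat.centralBinom_eq_two_mul_choose, show 2 * n + 2 = 2 * (n + 1) by ring,
    ← Nat.centralBinom_eq_two_mul_choose]
  field_simp
  linear_combination (3 : ℚ) * hpred - hsucc
end
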